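/- Let p \ge 1 be a real number and R > 0. For each integer n \ge 2 and each real x with 0 \le x \le n^{1/p}R, let \rho_n(x) = [p \Gamma(1 + n/p) / (\Gamma(1/p) \Gamma(1 + (n-1)/p))] \cdot (nR^p - x^p)^{(n-1)/p} / (nR^p)^{n/p} be the marginal density of the first coordinate of the uniform distribution on M_n^+ = {x \in \mathbb{R}^n : x_k \ge 0, \sum x_k^p \le nR^p}. Then for every fixed real x \ge 0, \rho_n(x) converges as n \to \infty to \rho(x) = (1 / (R \Gamma(1/p) p^{1/p - 1})) e^{-x^p/(pR^p)}. -/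

import Mathlib

/-!
With `y = 1 + (n - 1)/p` and `N = n Rᵖ`, the density factors as
`ρₙ(x) = p/Γ(1/p) · Γ(y + 1/p)/(Γ(y) y^(1/p)) · (y/N)^(1/p) · (1 - xᵖ/N)^((n-1)/p)`.
The Gamma ratio tends to `1` (Wendel's limit, squeezed between two bounds coming from the
log-convexity of `Γ`), `(y/N)^(1/p) → (p Rᵖ)^(-1/p)`, and the last factor is a compound-interest
limit tending to `exp(-xᵖ/(p Rᵖ))`.
-/

open Real Filter Topology

namespace Real

theorem Gamma_add_le_Gamma_mul_rpow {a y : ℝ} (ha₀ : 0 ≤ a) (ha₁ : a ≤ 1) (hy : 0 < y) :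
    Gamma (y + a) ≤ Gamma y * y ^ a := by
  have hconv := convexOn_log_Gamma.2 (Set.mem_Ioi.2 hy) (Set.mem_Ioi.2 (by linarith : 0 < y + 1))
    (sub_nonneg.2 ha₁) ha₀ (by ring)
  simp only [smul_eq_mul, Function.comp_apply, Gamma_add_one hy.ne',
    log_mul hy.ne' (Gamma_pos_of_pos hy).ne'] at hconv
  rw [show (1 - a) * y + a * (y + 1) = y + a by ring] at hconv
  rw [← log_le_log_iff (Gamma_pos_of_pos (by linarith)) (by positivity),
    log_mul (Gamma_pos_of_pos hy).ne' (by positivity), log_rpow hy]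
  linarith

theorem tendsto_Gamma_add_div_Gamma_mul_rpow {a : ℝ} (ha₀ : 0 ≤ a) (ha₁ : a ≤ 1) :
    Tendsto (fun y => Gamma (y + a) / (Gamma y * y ^ a)) atTop (𝓝 1) := by
  have hlower : Tendsto (fun y => (1 + a / y) ^ (a - 1)) atTop (𝓝 1) := by
    have h := ((tendsto_const_nhds (x := a)).div_atTop tendsto_id).const_add 1 |>.rpow_const
      (p := a - 1) (Or.inl (by norm_num))
    simpa using h
  refine tendsto_of_tendsto_of_tendsto_of_le_of_le' hlower tendsto_const_nhds ?_ ?_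
  all_goals filter_upwards [eventually_gt_atTop 0] with y hy
  · have hya : 0 < y + a := by linarith
    -- the upper bound, taken at `y + a` with exponent `1 - a`, bounds `Γ (y + 1) = y Γ y`
    have h := Gamma_add_le_Gamma_mul_rpow (sub_nonneg.2 ha₁) (by linarith) hya
    rw [add_add_sub_cancel, Gamma_add_one hy.ne'] at h
    rw [le_div_iff₀ (by have := Gamma_pos_of_pos hy; positivity)]
    calc (1 + a / y) ^ (a - 1) * (Gamma y * y ^ a) = y * Gamma y * (y + a) ^ (a - 1) := by
          rw [one_add_div hy.ne', div_rpow hya.le hy.le, rpow_sub_one hy.ne']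
          field_simp
      _ ≤ Gamma (y + a) * (y + a) ^ (1 - a) * (y + a) ^ (a - 1) := by gcongr
      _ = Gamma (y + a) := by rw [mul_assoc, ← rpow_add hya]; simp
  · exact div_le_one (by have := Gamma_pos_of_pos hy; positivity) |>.2
      (Gamma_add_le_Gamma_mul_rpow ha₀ ha₁ hy)

theorem tendsto_one_sub_div_rpow_sub_one_div_exp (c p : ℝ) :
    Tendsto (fun t : ℝ => (1 - c / t) ^ ((t - 1) / p)) atTop (𝓝 (exp (-c / p))) := by
  have hbase : Tendsto (fun t : ℝ => 1 + -c / t) atTop (𝓝 1) := by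
    simpa using ((tendsto_const_nhds (x := -c)).div_atTop tendsto_id).const_add 1
  have h := ((tendsto_one_add_div_rpow_exp (-c)).rpow_const (p := 1 / p)
    (Or.inl (exp_pos _).ne')).mul (hbase.rpow_const (p := -1 / p) (Or.inl one_ne_zero))
  rw [← exp_mul, one_rpow, mul_one, mul_one_div] at h
  refine h.congr' ?_
  filter_upwards [eventually_gt_atTop 0, eventually_gt_atTop c] with t ht₀ htc
  have hb : 0 < 1 + -c / t := by rw [neg_div, ← sub_eq_add_neg, sub_pos, div_lt_one ht₀]; exact htc
  rw [← rpow_mul hb.le, ← rpow_add hb, neg_div t c, ← sub_eq_add_neg]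
  congr 1
  ring

end Real

/-- `ρₙ(x)` with the dimension `n` allowed to be any real `t`. -/
noncomputable def marginalDensity (p R t x : ℝ) : ℝ :=
  p * Gamma (1 + t / p) / (Gamma (1 / p) * Gamma (1 + (t - 1) / p)) *
    ((t * R ^ p - x ^ p) ^ ((t - 1) / p) / (t * R ^ p) ^ (t / p))

theorem marginalDensity_eq {p R t x : ℝ} (hp : 0 < p) (hR : 0 < R) (ht : 1 ≤ t)
    (hx : x ^ p ≤ t * R ^ p) :
    marginalDensity p R t x =
      p / Gamma (1 / p) *
        (Gamma (1 + (t - 1) / p + 1 / p) /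
          (Gamma (1 + (t - 1) / p) * (1 + (t - 1) / p) ^ (1 / p))) *
        ((1 + (t - 1) / p) / (t * R ^ p)) ^ (1 / p) *
        (1 - x ^ p / R ^ p / t) ^ ((t - 1) / p) := by
  have hy : 0 < 1 + (t - 1) / p := by
    have : 0 ≤ (t - 1) / p := div_nonneg (by linarith) hp.le
    linarith
  have hN : 0 < t * R ^ p := by positivity
  have hb : 0 ≤ 1 - x ^ p / R ^ p / t := by
    rw [div_div, sub_nonneg, div_le_one (by positivity), mul_comm]; exact hx
  have hsplit : (t * R ^ p - x ^ p) ^ ((t - 1) / p) =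
      (t * R ^ p) ^ (-(1 / p)) * (t * R ^ p) ^ (t / p) *
        (1 - x ^ p / R ^ p / t) ^ ((t - 1) / p) := by
    rw [← rpow_add hN, show -(1 / p) + t / p = (t - 1) / p by ring, ← mul_rpow hN.le hb]
    field_simp
  rw [marginalDensity, hsplit, div_rpow hy.le hN.le, rpow_neg hN.le,
    show 1 + t / p = 1 + (t - 1) / p + 1 / p by ring]
  have hΓ := (Gamma_pos_of_pos hy).ne'
  have hya := (rpow_pos_of_pos hy (1 / p)).ne'
  have hNa := (rpow_pos_of_pos hN (1 / p)).ne'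
  have hNt := (rpow_pos_of_pos hN (t / p)).ne'
  -- keep `field_simp` from normalizing inside the exponents
  generalize Gamma (1 + (t - 1) / p) = G at *
  generalize (1 + (t - 1) / p) ^ (1 / p) = Y at *
  generalize (t * R ^ p) ^ (1 / p) = M at *
  generalize (t * R ^ p) ^ (t / p) = K at *
  field_simp

theorem tendsto_marginalDensity {p R : ℝ} (hp : 1 ≤ p) (hR : 0 < R) (x : ℝ) :
    Tendsto (fun t => marginalDensity p R t x) atTop
      (𝓝 (1 / (R * Gamma (1 / p) * p ^ (1 / p - 1)) * exp (-(x ^ p) / (p * R ^ p)))) := by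
  have hp₀ : 0 < p := by linarith
  have hRp : 0 < R ^ p := by positivity
  have hy : Tendsto (fun t : ℝ => 1 + (t - 1) / p) atTop atTop :=
    tendsto_atTop_add_const_left _ 1
      ((tendsto_atTop_add_const_right _ (-1) tendsto_id).atTop_div_const hp₀)
  have hratio :
      Tendsto (fun t => (1 + (t - 1) / p) / (t * R ^ p)) atTop (𝓝 (1 / (p * R ^ p))) := by
    have h := ((tendsto_inv_atTop_zero.const_mul (1 - 1 / p)).add_const (1 / p)).div_const (R ^ p)
    rw [mul_zero, zero_add, div_div] at h
    refine h.congr' ?_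
    filter_upwards [eventually_gt_atTop 0] with t ht
    field_simp
    ring
  have hlim := ((tendsto_const_nhds (x := p / Gamma (1 / p))).mul
    ((tendsto_Gamma_add_div_Gamma_mul_rpow (by positivity) (div_le_one_of_le₀ hp hp₀.le)).comp
      hy)).mul (hratio.rpow_const (p := 1 / p) (Or.inl (by positivity))) |>.mul
    (tendsto_one_sub_div_rpow_sub_one_div_exp (x ^ p / R ^ p) p)
  have hval : p / Gamma (1 / p) * 1 * (1 / (p * R ^ p)) ^ (1 / p) * exp (-(x ^ p / R ^ p) / p) =
      1 / (R * Gamma (1 / p) * p ^ (1 / p - 1)) * exp (-(x ^ p) / (p * R ^ p)) := by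
    rw [div_rpow zero_le_one (by positivity), one_rpow, mul_rpow hp₀.le hRp.le, ← rpow_mul hR.le,
      mul_one_div_cancel hp₀.ne', rpow_one, rpow_sub_one hp₀.ne',
      show -(x ^ p / R ^ p) / p = -x ^ p / (p * R ^ p) by ring]
    have := Gamma_pos_of_pos (one_div_pos.2 hp₀)
    have := rpow_pos_of_pos hp₀ (1 / p)
    field_simp
  rw [← hval]
  refine hlim.congr' ?_
  filter_upwards [eventually_ge_atTop 1, eventually_ge_atTop (x ^ p / R ^ p)] with t ht htx
  exact (marginalDensity_eq hp₀ hR ht ((div_le_iff₀ hRp).1 htx)).symm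

theorem stmt_6_general (p : ℝ) (hp : 1 ≤ p) (R : ℝ) (hR : 0 < R) (x : ℝ) :
    Tendsto
      (fun n : ℕ =>
        (p * Gamma (1 + (n : ℝ) / p) / (Gamma (1 / p) * Gamma (1 + ((n : ℝ) - 1) / p))) *
          (((n : ℝ) * R ^ p - x ^ p) ^ (((n : ℝ) - 1) / p) /
            ((n : ℝ) * R ^ p) ^ ((n : ℝ) / p)))
      atTop
      (nhds (1 / (R * Gamma (1 / p) * p ^ (1 / p - 1)) *
        Real.exp (-(x ^ p) / (p * R ^ p)))) :=
  (tendsto_marginalDensity hp hR x).comp tendsto_natCast_atTop_atTop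

/-- For fixed `x ≥ 0`, the marginal density `ρₙ(x)` of the first coordinate of the uniform
distribution on `Mₙ⁺ = {x ∈ ℝⁿ : xₖ ≥ 0, ∑ xₖᵖ ≤ nRᵖ}` (`p ≥ 1` real) converges, as
`n → ∞`, to `ρ(x) = e^(-xᵖ/(pRᵖ)) / (R Γ(1/p) p^(1/p - 1))`. -/
theorem stmt_6 (p : ℝ) (hp : 1 ≤ p) (R : ℝ) (hR : 0 < R) (x : ℝ) (hx : 0 ≤ x) :
    Tendsto
      (fun n : ℕ =>
        (p * Gamma (1 + (n : ℝ) / p) / (Gamma (1 / p) * Gamma (1 + ((n : ℝ) - 1) / p))) *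
          (((n : ℝ) * R ^ p - x ^ p) ^ (((n : ℝ) - 1) / p) /
            ((n : ℝ) * R ^ p) ^ ((n : ℝ) / p)))
      atTop
      (nhds (1 / (R * Gamma (1 / p) * p ^ (1 / p - 1)) *
        Real.exp (-(x ^ p) / (p * R ^ p)))) :=
  stmt_6_general p hp R hR x
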